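/- Let (A, ·, α) be a super anticommutative Hom-superalgebra over a field K of characteristic 0. Then for all homogeneous w, x, y, z: α²(w)·J̃(x,y,z) - (-1)^{|w|(|x|+|y|+|z|)} α²(x)·J̃(y,z,w) + (-1)^{(|y|+|z|)(|w|+|x|)} α²(y)·J̃(z,w,x) - (-1)^{|z|(|x|+|y|+|w|)} α²(z)·J̃(w,x,y) = J̃(w·x,α(y),α(z)) + (-1)^{(|y|+|z|)(|x|+|w|)} J̃(y·z,α(w),α(x)) + (-1)^{|x|(|y|+|z|)} J̃(w·y,α(z),α(x)) + (-1)^{|z|(|x|+|y|)+|w|(|x|+|z|)} J̃(z·x,α(w),α(y)) - (-1)^{|z|(|x|+|y|+|w|)} J̃(z·w,α(x),α(y)) - (-1)^{|w|(|x|+|y|+|z|)} J̃(x·y,α(z),α(w)). -/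

import Mathlib

/-!
Super anticommutativity moves each factor `α² a` on the left-hand side to the right of its
Jacobian, so both sides become combinations of terms `((a·b)·α c)·α² d` and `α(a·b)·α(c·d)`.
The terms of the second kind occur only on the right-hand side, in pairs that cancel by
anticommutativity; the remaining twelve terms on each side agree after reordering the inner
products, with signs that are checked parity by parity.
-/

/-- The sign `(-1)^i` associated to a parity `i : ZMod 2`. -/
def sgn (K : Type*) [Field K] (i : ZMod 2) : K := (-1 : K) ^ i.val

/-- The Hom-superJacobian of elements `x, y, z` of parities `px, py, pz`:
`J̃(x,y,z) = (x·y)·α(z) + (-1)^{px(py+pz)} (y·z)·α(x) + (-1)^{pz(px+py)} (z·x)·α(y)`. -/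
def homSuperJacobian {K M : Type*} [Field K] [AddCommGroup M] [Module K M]
    (mul : M →ₗ[K] M →ₗ[K] M) (α : M →ₗ[K] M)
    (px py pz : ZMod 2) (x y z : M) : M :=
  mul (mul x y) (α z) + sgn K (px * (py + pz)) • mul (mul y z) (α x)
    + sgn K (pz * (px + py)) • mul (mul z x) (α y)

section Sign

variable {K : Type*} [Field K]

@[simp]
lemma sgn_zero : sgn K 0 = 1 := by simp [sgn]

@[simp]
lemma sgn_one : sgn K 1 = -1 := by simp [sgn, ZMod.val_one]

lemma sgn_add (i j : ZMod 2) : sgn K (i + j) = sgn K i * sgn K j := by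
  simp only [sgn, ← pow_add]
  rw [ZMod.val_add, ← neg_one_pow_eq_pow_mod_two]

lemma zmod_two_eq_zero_or_one (i : ZMod 2) : i = 0 ∨ i = 1 := by
  revert i; decide

end Sign

section HomSuperalgebra

variable {K M : Type*} [Field K] [AddCommGroup M] [Module K M]
  {A : ZMod 2 → Submodule K M} {mul : M →ₗ[K] M →ₗ[K] M} {α : M →ₗ[K] M}

lemma homSuperJacobian_mem
    (hmul_even : ∀ i j : ZMod 2, ∀ x ∈ A i, ∀ y ∈ A j, mul x y ∈ A (i + j))
    (hα_even : ∀ i : ZMod 2, ∀ x ∈ A i, α x ∈ A i)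
    {i j k : ZMod 2} {x y z : M} (hx : x ∈ A i) (hy : y ∈ A j) (hz : z ∈ A k) :
    homSuperJacobian mul α i j k x y z ∈ A (i + j + k) := by
  refine add_mem (add_mem ?_ (Submodule.smul_mem _ _ ?_)) (Submodule.smul_mem _ _ ?_)
  · exact hmul_even _ _ _ (hmul_even _ _ _ hx _ hy) _ (hα_even _ _ hz)
  · simpa only [add_comm, add_left_comm] using
      hmul_even _ _ _ (hmul_even _ _ _ hy _ hz) _ (hα_even _ _ hx)
  · simpa only [add_comm, add_left_comm] using
      hmul_even _ _ _ (hmul_even _ _ _ hz _ hx) _ (hα_even _ _ hy)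

lemma mul_map_map_homSuperJacobian
    (hmul_even : ∀ i j : ZMod 2, ∀ x ∈ A i, ∀ y ∈ A j, mul x y ∈ A (i + j))
    (hα_even : ∀ i : ZMod 2, ∀ x ∈ A i, α x ∈ A i)
    (hanti : ∀ i j : ZMod 2, ∀ x ∈ A i, ∀ y ∈ A j, mul x y = -(sgn K (i * j) • mul y x))
    {i j k l : ZMod 2} {w x y z : M}
    (hw : w ∈ A l) (hx : x ∈ A i) (hy : y ∈ A j) (hz : z ∈ A k) :
    mul (α (α w)) (homSuperJacobian mul α i j k x y z) =
      -(sgn K (l * (i + j + k)) • mul (homSuperJacobian mul α i j k x y z) (α (α w))) :=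
  hanti _ _ _ (hα_even _ _ (hα_even _ _ hw)) _
    (homSuperJacobian_mem hmul_even hα_even hx hy hz)

lemma homSuperJacobian_mul_map_map
    (hmul_even : ∀ i j : ZMod 2, ∀ x ∈ A i, ∀ y ∈ A j, mul x y ∈ A (i + j))
    (hα_even : ∀ i : ZMod 2, ∀ x ∈ A i, α x ∈ A i)
    (hmult : ∀ x y : M, α (mul x y) = mul (α x) (α y))
    (hanti : ∀ i j : ZMod 2, ∀ x ∈ A i, ∀ y ∈ A j, mul x y = -(sgn K (i * j) • mul y x))
    {i j k l : ZMod 2} {u v s t : M}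
    (hu : u ∈ A i) (hv : v ∈ A j) (ht : t ∈ A l) :
    homSuperJacobian mul α (i + j) k l (mul u v) (α s) (α t) =
      mul (mul (mul u v) (α s)) (α (α t)) - sgn K (k * l) • mul (mul (mul u v) (α t)) (α (α s))
        + sgn K ((i + j) * (k + l)) • mul (α (mul s t)) (α (mul u v)) := by
  have hsign : sgn K (l * (i + j + k)) * sgn K (l * (i + j)) = sgn K (k * l) := by
    rw [← sgn_add]
    congr 1
    grind
  rw [homSuperJacobian, ← hmult s t,
    hanti _ _ _ (hα_even _ _ ht) _ (hmul_even _ _ _ hu _ hv)]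
  simp only [map_neg, map_smul, LinearMap.neg_apply, LinearMap.smul_apply, smul_neg, smul_smul,
    hsign]
  abel

end HomSuperalgebra

theorem stmt5_general
    {K M : Type*} [Field K] [AddCommGroup M] [Module K M]
    (A : ZMod 2 → Submodule K M)
    (mul : M →ₗ[K] M →ₗ[K] M) (α : M →ₗ[K] M)
    (hmul_even : ∀ i j : ZMod 2, ∀ x ∈ A i, ∀ y ∈ A j, mul x y ∈ A (i + j))
    (hα_even : ∀ i : ZMod 2, ∀ x ∈ A i, α x ∈ A i)
    (hmult : ∀ x y : M, α (mul x y) = mul (α x) (α y))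
    (hanti : ∀ i j : ZMod 2, ∀ x ∈ A i, ∀ y ∈ A j,
      mul x y = -(sgn K (i * j) • mul y x)) :
    ∀ pw px py pz : ZMod 2, ∀ w ∈ A pw, ∀ x ∈ A px, ∀ y ∈ A py, ∀ z ∈ A pz,
      mul (α (α w)) (homSuperJacobian mul α px py pz x y z)
          - sgn K (pw * (px + py + pz)) •
              mul (α (α x)) (homSuperJacobian mul α py pz pw y z w)
          + sgn K ((py + pz) * (pw + px)) •
              mul (α (α y)) (homSuperJacobian mul α pz pw px z w x)
          - sgn K (pz * (px + py + pw)) •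
              mul (α (α z)) (homSuperJacobian mul α pw px py w x y) =
        homSuperJacobian mul α (pw + px) py pz (mul w x) (α y) (α z)
          + sgn K ((py + pz) * (px + pw)) •
              homSuperJacobian mul α (py + pz) pw px (mul y z) (α w) (α x)
          + sgn K (px * (py + pz)) •
              homSuperJacobian mul α (pw + py) pz px (mul w y) (α z) (α x)
          + sgn K (pz * (px + py) + pw * (px + pz)) •
              homSuperJacobian mul α (pz + px) pw py (mul z x) (α w) (α y)
          - sgn K (pz * (px + py + pw)) •
              homSuperJacobian mul α (pz + pw) px py (mul z w) (α x) (α y)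
          - sgn K (pw * (px + py + pz)) •
              homSuperJacobian mul α (px + py) pz pw (mul x y) (α z) (α w) := by
  intro pw px py pz w hw x hx y hy z hz
  have hmove := @mul_map_map_homSuperJacobian K M _ _ _ A mul α hmul_even hα_even hanti
  have hexpand := @homSuperJacobian_mul_map_map K M _ _ _ A mul α hmul_even hα_even hmult hanti
  have hmem {i j : ZMod 2} {a b : M} (ha : a ∈ A i) (hb : b ∈ A j) : α (mul a b) ∈ A (i + j) :=
    hα_even _ _ (hmul_even _ _ _ ha _ hb)
  rw [hmove hw hx hy hz, hmove hx hy hz hw, hmove hy hz hw hx, hmove hz hw hx hy,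
    hexpand hw hx hz, hexpand hy hz hx, hexpand hw hy hx,
    hexpand hz hx hy, hexpand hz hw hy, hexpand hx hy hw]
  -- put each cancelling pair of terms `α(a·b)·α(c·d)` in the same order
  rw [hanti _ _ _ (hmem hy hz) _ (hmem hw hx), hanti _ _ _ (hmem hz hx) _ (hmem hw hy),
    hanti _ _ _ (hmem hz hw) _ (hmem hx hy)]
  simp only [homSuperJacobian, map_add, map_smul, LinearMap.add_apply, LinearMap.smul_apply]
  -- the left-hand side has `x·z` and `y·w` where the right-hand side has `z·x` and `w·y`
  rw [hanti _ _ x hx z hz, hanti _ _ y hy w hw]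
  simp only [map_neg, map_smul, LinearMap.neg_apply, LinearMap.smul_apply]
  match_scalars <;>
    rcases zmod_two_eq_zero_or_one pw with rfl | rfl <;>
    rcases zmod_two_eq_zero_or_one px with rfl | rfl <;>
    rcases zmod_two_eq_zero_or_one py with rfl | rfl <;>
    rcases zmod_two_eq_zero_or_one pz with rfl | rfl <;>
    simp [sgn_add, mul_add]

theorem stmt5
    {K M : Type*} [Field K] [CharZero K] [AddCommGroup M] [Module K M]
    (A : ZMod 2 → Submodule K M) (hA : DirectSum.IsInternal A)
    (mul : M →ₗ[K] M →ₗ[K] M) (α : M →ₗ[K] M)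
    (hmul_even : ∀ i j : ZMod 2, ∀ x ∈ A i, ∀ y ∈ A j, mul x y ∈ A (i + j))
    (hα_even : ∀ i : ZMod 2, ∀ x ∈ A i, α x ∈ A i)
    (hmult : ∀ x y : M, α (mul x y) = mul (α x) (α y))
    (hanti : ∀ i j : ZMod 2, ∀ x ∈ A i, ∀ y ∈ A j,
      mul x y = -(sgn K (i * j) • mul y x)) :
    ∀ pw px py pz : ZMod 2, ∀ w ∈ A pw, ∀ x ∈ A px, ∀ y ∈ A py, ∀ z ∈ A pz,
      mul (α (α w)) (homSuperJacobian mul α px py pz x y z)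
          - sgn K (pw * (px + py + pz)) •
              mul (α (α x)) (homSuperJacobian mul α py pz pw y z w)
          + sgn K ((py + pz) * (pw + px)) •
              mul (α (α y)) (homSuperJacobian mul α pz pw px z w x)
          - sgn K (pz * (px + py + pw)) •
              mul (α (α z)) (homSuperJacobian mul α pw px py w x y) =
        homSuperJacobian mul α (pw + px) py pz (mul w x) (α y) (α z)
          + sgn K ((py + pz) * (px + pw)) •
              homSuperJacobian mul α (py + pz) pw px (mul y z) (α w) (α x)
          + sgn K (px * (py + pz)) •
              homSuperJacobian mul α (pw + py) pz px (mul w y) (α z) (α x)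
          + sgn K (pz * (px + py) + pw * (px + pz)) •
              homSuperJacobian mul α (pz + px) pw py (mul z x) (α w) (α y)
          - sgn K (pz * (px + py + pw)) •
              homSuperJacobian mul α (pz + pw) px py (mul z w) (α x) (α y)
          - sgn K (pw * (px + py + pz)) •
              homSuperJacobian mul α (px + py) pz pw (mul x y) (α z) (α w) :=
  stmt5_general A mul α hmul_even hα_even hmult hanti
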